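/- arXiv:2108.04769 — 3 statements merged into one kernel-verified Lean document; each statement's English description precedes it below -/
import Mathlib

section
/- For an F-program P, the ID-stable operator S_P defined by S_P(I) = the least model of the ID-reduct P^{I,+} is antimonotone: I ⊆ J implies S_P(J) ⊆ S_P(I). -/
/-!
Enlarging `I` can only make the positive-polarity reduct of a rule body harder to satisfy, since
atoms in negative positions are evaluated in `I`. Hence every prefixed point of `T` for
`P^{I,+}` is one for `P^{J,+}`, and the least model of `P^{J,+}` lies inside that of `P^{I,+}`.
-/

inductive Formula (α : Type) : Type 1
  | atom : α → Formula α
  | conj : {ι : Type} → (ι → Formula α) → Formula α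
  | disj : {ι : Type} → (ι → Formula α) → Formula α
  | impl : Formula α → Formula α → Formula α

namespace Formula

def fbot {α : Type} : Formula α := .disj (fun i : Empty => i.elim)
def ftop {α : Type} : Formula α := .conj (fun i : Empty => i.elim)

def Sat {α : Type} (I : Set α) : Formula α → Prop
  | .atom a => a ∈ I
  | .conj f => ∀ i, Sat I (f i)
  | .disj f => ∃ i, Sat I (f i)
  | .impl F G => Sat I F → Sat I G

open Classical in
noncomputable def reduct {α : Type} (I : Set α) : Bool → Formula α → Formula α
  | true, .atom a => .atom a
  | false, .atom a => if a ∈ I then ftop else fbot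
  | pol, .conj f => .conj (fun i => reduct I pol (f i))
  | pol, .disj f => .disj (fun i => reduct I pol (f i))
  | true, .impl F G => .impl (reduct I false F) (reduct I true G)
  | false, .impl F G => .impl (reduct I true F) (reduct I false G)

def atomsPol {α : Type} : Bool → Formula α → Set α
  | true, .atom a => {a}
  | false, .atom _ => ∅
  | pol, .conj f => ⋃ i, atomsPol pol (f i)
  | pol, .disj f => ⋃ i, atomsPol pol (f i)
  | pol, .impl F G => atomsPol (!pol) F ∪ atomsPol pol G

def Positive {α : Type} (F : Formula α) : Prop := atomsPol false F = ∅

open Classical in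
noncomputable def freduct {α : Type} (X : Set α) : Formula α → Formula α
  | .atom a => if a ∈ X then .atom a else fbot
  | .conj f => if Sat X (.conj f) then .conj (fun i => freduct X (f i)) else fbot
  | .disj f => if Sat X (.disj f) then .disj (fun i => freduct X (f i)) else fbot
  | .impl F G => if Sat X (.impl F G) then .impl (freduct X F) (freduct X G) else fbot

def noImpl {α : Type} : Formula α → Prop
  | .atom _ => True
  | .conj f => ∀ i, noImpl (f i)
  | .disj f => ∀ i, noImpl (f i)
  | .impl _ _ => False

def inR {α : Type} : Formula α → Prop
  | .atom _ => True
  | .conj f => ∀ i, inR (f i)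
  | .disj f => ∀ i, inR (f i)
  | .impl F G => noImpl F ∧ inR G

end Formula

open Formula

structure Rule (α : Type) : Type 1 where
  head : α
  body : Formula α

abbrev Program (α : Type) := Set (Rule α)

def Tstep {α : Type} (P : Program α) (X : Set α) : Set α :=
  {a | ∃ r ∈ P, r.head = a ∧ Sat X r.body}

noncomputable def progReduct {α : Type} (P : Program α) (I : Set α) : Program α :=
  (fun r => ⟨r.head, reduct I true r.body⟩) '' P

noncomputable def stableOp {α : Type} (P : Program α) (I : Set α) : Set α :=
  ⋂₀ {X | Tstep (progReduct P I) X ⊆ X}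

def precLe {α : Type} (p q : Set α × Set α) : Prop := p.1 ⊆ q.1 ∧ q.2 ⊆ p.2

noncomputable def wfOp {α : Type} (P : Program α) (p : Set α × Set α) : Set α × Set α :=
  (stableOp P p.2, stableOp P p.1)

noncomputable def IsWFModel {α : Type} (P : Program α) (p : Set α × Set α) : Prop :=
  wfOp P p = p ∧ ∀ q, wfOp P q = q → precLe p q

def IsModel {α : Type} (P : Program α) (X : Set α) : Prop :=
  ∀ r ∈ P, Sat X r.body → r.head ∈ X

noncomputable def freductProg {α : Type} (P : Program α) (X : Set α) : Program α :=
  (fun r => ⟨r.head, freduct X r.body⟩) '' P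

noncomputable def StableModel {α : Type} (P : Program α) (X : Set α) : Prop :=
  IsModel (freductProg P X) X ∧ ∀ Y, IsModel (freductProg P X) Y → Y ⊆ X → Y = X

noncomputable def simpProg {α : Type} (P : Program α) (I J : Set α) : Program α :=
  {r | r ∈ P ∧ Sat J (reduct I true r.body)}

noncomputable def relStable {α : Type} (P : Program α) (Ir J : Set α) : Set α :=
  ⋂₀ {X | Tstep (progReduct P J) (Ir ∪ X) ⊆ X}

noncomputable def relWF {α : Type} (P : Program α) (r p : Set α × Set α) : Set α × Set α :=
  (relStable P r.1 (p.2 ∪ r.2), relStable P r.2 (p.1 ∪ r.1))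

namespace Formula

variable {α : Type}

@[simp] lemma sat_ftop (X : Set α) : Sat X (ftop : Formula α) := fun i => i.elim

@[simp] lemma not_sat_fbot (X : Set α) : ¬ Sat X (fbot : Formula α) := fun ⟨i, _⟩ => i.elim

/-- Implication flips the polarity of its antecedent, so both polarities are handled together. -/
lemma sat_reduct_antitone {I J : Set α} (h : I ⊆ J) (X : Set α) (F : Formula α) :
    (Sat X (reduct J true F) → Sat X (reduct I true F)) ∧
      (Sat X (reduct I false F) → Sat X (reduct J false F)) := by
  induction F with
  | atom a =>
    refine ⟨id, ?_⟩
    by_cases ha : a ∈ I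
    · simp [reduct, ha, h ha]
    · simp [reduct, ha]
  | conj f ih => exact ⟨fun hs i => (ih i).1 (hs i), fun hs i => (ih i).2 (hs i)⟩
  | disj f ih => exact ⟨fun ⟨i, hs⟩ => ⟨i, (ih i).1 hs⟩, fun ⟨i, hs⟩ => ⟨i, (ih i).2 hs⟩⟩
  | impl F G ihF ihG =>
    exact ⟨fun hs hF => ihG.1 (hs (ihF.2 hF)), fun hs hF => ihG.2 (hs (ihF.1 hF))⟩

end Formula

lemma Tstep_progReduct_antitone {α : Type} (P : Program α) {I J : Set α} (h : I ⊆ J)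
    (X : Set α) : Tstep (progReduct P J) X ⊆ Tstep (progReduct P I) X := by
  rintro _ ⟨_, ⟨r, hr, rfl⟩, rfl, hsat⟩
  exact ⟨_, ⟨r, hr, rfl⟩, rfl, (sat_reduct_antitone h X r.body).1 hsat⟩

/-- The ID-stable operator of an F-program is antimonotone. -/
theorem stmt8 {α : Type} (P : Program α) (I J : Set α) (h : I ⊆ J) :
    stableOp P J ⊆ stableOp P I :=
  Set.sInter_subset_sInter fun _ hX => (Tstep_progReduct_antitone P h _).trans hX
end

section
/- The ID-well-founded model of any F-program P is consistent: if (I,J) is the least fixed point of the ID-well-founded operator W_P(I,J) = (S_P(J), S_P(I)) with respect to the precision ordering, then I ⊆ J. -/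
open Formula

theorem wfOp_swap {α : Type} (P : Program α) (p : Set α × Set α) :
    wfOp P p.swap = (wfOp P p).swap :=
  rfl

theorem IsWFModel.swap_isFixedPt {α : Type} {P : Program α} {p : Set α × Set α}
    (h : IsWFModel P p) : wfOp P p.swap = p.swap := by
  rw [wfOp_swap, h.1]

/-- The ID-well-founded model of an F-program is consistent: `I ⊆ J`. -/
theorem stmt10 {α : Type} (P : Program α) (I J : Set α)
    (h : IsWFModel P (I, J)) : I ⊆ J :=
  (h.2 (J, I) h.swap_isFixedPt).1
end

section
/- Let P be an F-program with ID-well-founded model (I,J). Then P and its simplification P^{I,J} have the same ID-well-founded model. -/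
open Formula

/-!
If `I ⊆ X` and `S_P(X) ⊆ J`, then `S_P(X)` is also the least model of the reduct of `P^{I,J}`
with respect to `X`: each rule applied in deriving `S_P(X)` has a body whose reduct with respect
to `I` is weaker than that with respect to `X`, so it holds in `S_P(X) ⊆ J`. At `(I, J)` this
makes `(I, J)` a fixpoint of `W` for `P^{I,J}`. At every pair below `(I, J)` in the precision
order it shows that `W_P` is at most `W` for `P^{I,J}`, so the least fixpoint of the latter
cannot lie strictly below `(I, J)`.
-/

theorem OrderHom.lfp_eq_of_map_lfp_eq {L : Type*} [CompleteLattice L] {f g : L →o L}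
    (hg : g (lfp f) = lfp f) (hfg : ∀ x ≤ lfp f, f x ≤ g x) : lfp g = lfp f :=
  (lfp_le_fixed g hg).antisymm
    (lfp_le f ((hfg _ (lfp_le_fixed g hg)).trans (map_lfp g).le))

section

variable {α : Type}

namespace Formula

open Classical in
theorem sat_ite_ftop_fbot {X K : Set α} {a : α} :
    Sat X (if a ∈ K then ftop else fbot) ↔ a ∈ K := by
  split_ifs with ha
  · exact iff_of_true (fun i => i.elim) ha
  · exact iff_of_false (fun ⟨i, _⟩ => i.elim) ha

theorem sat_reduct_monotone (K : Set α) (F : Formula α) :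
    Monotone (fun X => Sat X (reduct K true F)) ∧
      Antitone (fun X => Sat X (reduct K false F)) := by
  induction F with
  | atom a =>
    refine ⟨fun X Y h ha => h ha, fun X Y _ => ?_⟩
    simp only [reduct, sat_ite_ftop_fbot, le_refl]
  | conj f ih =>
    exact ⟨fun X Y h hX i => (ih i).1 h (hX i), fun X Y h hY i => (ih i).2 h (hY i)⟩
  | disj f ih =>
    exact ⟨fun X Y h ⟨i, hX⟩ => ⟨i, (ih i).1 h hX⟩, fun X Y h ⟨i, hY⟩ => ⟨i, (ih i).2 h hY⟩⟩
  | impl F G ihF ihG =>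
    exact ⟨fun X Y h hX hF => ihG.1 h (hX (ihF.2 h hF)),
      fun X Y h hY hF => ihG.2 h (hY (ihF.1 h hF))⟩

theorem sat_reduct_antitone_reductSet (X : Set α) (F : Formula α) :
    Antitone (fun K => Sat X (reduct K true F)) ∧
      Monotone (fun K => Sat X (reduct K false F)) := by
  induction F with
  | atom a =>
    refine ⟨fun K L _ ha => ha, fun K L h => ?_⟩
    simp only [reduct, sat_ite_ftop_fbot]
    exact fun ha => h ha
  | conj f ih =>
    exact ⟨fun K L h hL i => (ih i).1 h (hL i), fun K L h hK i => (ih i).2 h (hK i)⟩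
  | disj f ih =>
    exact ⟨fun K L h ⟨i, hL⟩ => ⟨i, (ih i).1 h hL⟩, fun K L h ⟨i, hK⟩ => ⟨i, (ih i).2 h hK⟩⟩
  | impl F G ihF ihG =>
    exact ⟨fun K L h hL hF => ihG.1 h (hL (ihF.2 h hF)),
      fun K L h hK hF => ihG.2 h (hK (ihF.1 h hF))⟩

theorem sat_reduct_mono {K X Y : Set α} {F : Formula α} (h : X ⊆ Y) :
    Sat X (reduct K true F) → Sat Y (reduct K true F) :=
  (sat_reduct_monotone K F).1 h

theorem sat_reduct_anti {K L X : Set α} {F : Formula α} (h : K ⊆ L) :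
    Sat X (reduct L true F) → Sat X (reduct K true F) :=
  (sat_reduct_antitone_reductSet X F).1 h

end Formula

theorem simpProg_subset {P : Program α} {I J : Set α} : simpProg P I J ⊆ P := fun _ hr => hr.1

theorem mem_tstep_progReduct {P : Program α} {K X : Set α} {a : α} :
    a ∈ Tstep (progReduct P K) X ↔ ∃ r ∈ P, r.head = a ∧ Sat X (reduct K true r.body) := by
  simp only [Tstep, progReduct, Set.mem_ofPred_eq, Set.exists_mem_image]

noncomputable def tstepHom (P : Program α) (K : Set α) : Set α →o Set α where
  toFun := Tstep (progReduct P K)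
  monotone' X Y h a ha := by
    obtain ⟨r, hr, rfl, hsat⟩ := mem_tstep_progReduct.1 ha
    exact mem_tstep_progReduct.2 ⟨r, hr, rfl, sat_reduct_mono h hsat⟩

theorem tstep_stableOp_subset (P : Program α) (K : Set α) :
    Tstep (progReduct P K) (stableOp P K) ⊆ stableOp P K :=
  (OrderHom.map_lfp (tstepHom P K)).le

theorem stableOp_subset {P : Program α} {K Y : Set α} (h : Tstep (progReduct P K) Y ⊆ Y) :
    stableOp P K ⊆ Y :=
  OrderHom.lfp_le (tstepHom P K) h

theorem stableOp_anti (P : Program α) : Antitone (stableOp P) := fun K L h =>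
  stableOp_subset fun a ha => by
    obtain ⟨r, hr, rfl, hsat⟩ := mem_tstep_progReduct.1 ha
    exact tstep_stableOp_subset P K
      (mem_tstep_progReduct.2 ⟨r, hr, rfl, sat_reduct_anti h hsat⟩)

theorem stableOp_mono_program {P Q : Program α} (h : Q ⊆ P) (K : Set α) :
    stableOp Q K ⊆ stableOp P K :=
  stableOp_subset fun a ha => by
    obtain ⟨r, hr, rfl, hsat⟩ := mem_tstep_progReduct.1 ha
    exact tstep_stableOp_subset P K (mem_tstep_progReduct.2 ⟨r, h hr, rfl, hsat⟩)

theorem stableOp_simpProg {P : Program α} {I J X : Set α} (hIX : I ⊆ X)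
    (hXJ : stableOp P X ⊆ J) : stableOp (simpProg P I J) X = stableOp P X := by
  refine (stableOp_mono_program simpProg_subset X).antisymm ?_
  set M := stableOp P X
  set N := stableOp (simpProg P I J) X
  suffices Tstep (progReduct P X) (M ∩ N) ⊆ M ∩ N from
    (stableOp_subset this).trans Set.inter_subset_right
  intro a ha
  obtain ⟨r, hr, rfl, hsat⟩ := mem_tstep_progReduct.1 ha
  have hsimp : r ∈ simpProg P I J :=
    ⟨hr, sat_reduct_mono (Set.inter_subset_left.trans hXJ) (sat_reduct_anti hIX hsat)⟩
  exact ⟨tstep_stableOp_subset P X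
      (mem_tstep_progReduct.2 ⟨r, hr, rfl, sat_reduct_mono Set.inter_subset_left hsat⟩),
    tstep_stableOp_subset _ X
      (mem_tstep_progReduct.2 ⟨r, hsimp, rfl, sat_reduct_mono Set.inter_subset_right hsat⟩)⟩

/-- `precLe` is the product order on `Set α × (Set α)ᵒᵈ`. -/
def toPrec : Set α × Set α ≃ Set α × (Set α)ᵒᵈ :=
  (Equiv.refl _).prodCongr OrderDual.toDual

noncomputable def wfHom (P : Program α) : Set α × (Set α)ᵒᵈ →o Set α × (Set α)ᵒᵈ where
  toFun p := toPrec (wfOp P (toPrec.symm p))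
  monotone' _ _ h := ⟨stableOp_anti P h.2, stableOp_anti P h.1⟩

theorem wfHom_toPrec (P : Program α) (p : Set α × Set α) :
    wfHom P (toPrec p) = toPrec (wfOp P p) := rfl

theorem isWFModel_iff_toPrec_eq_lfp {P : Program α} {p : Set α × Set α} :
    IsWFModel P p ↔ toPrec p = OrderHom.lfp (wfHom P) := by
  have hfix : ∀ q, wfOp P q = q ↔ toPrec q ∈ Function.fixedPoints (wfHom P) := fun q => by
    rw [Function.mem_fixedPoints, Function.IsFixedPt, wfHom_toPrec, toPrec.apply_eq_iff_eq]
  have hleast : IsWFModel P p ↔ IsLeast (Function.fixedPoints (wfHom P)) (toPrec p) := by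
    refine and_congr (hfix p) ⟨fun h x hx => ?_, fun h q hq => h ((hfix q).1 hq)⟩
    obtain ⟨q, rfl⟩ := toPrec.surjective x
    exact h q ((hfix q).2 hx)
  rw [hleast]
  exact ⟨fun h => h.unique (OrderHom.isLeast_lfp _), fun h => h ▸ OrderHom.isLeast_lfp _⟩

end

/-- A program and its simplification w.r.t. its well-founded model have the same
well-founded model. -/
theorem stmt14 {α : Type} (P : Program α) (I J : Set α)
    (hWF : IsWFModel P (I, J)) : IsWFModel (simpProg P I J) (I, J) := by
  have hSJ : stableOp P J = I := congrArg Prod.fst hWF.1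
  have hSI : stableOp P I = J := congrArg Prod.snd hWF.1
  have hIJ : I ⊆ J := (hWF.2 (J, I) (by simp only [wfOp, hSJ, hSI])).1
  rw [isWFModel_iff_toPrec_eq_lfp] at hWF ⊢
  rw [hWF]
  refine (OrderHom.lfp_eq_of_map_lfp_eq ?_ fun x hx => ?_).symm
  · rw [← hWF, wfHom_toPrec]
    simp only [wfOp, stableOp_simpProg hIJ (hSJ.trans_subset hIJ), hSJ,
      stableOp_simpProg subset_rfl hSI.le, hSI]
  · rw [← hWF] at hx
    have hJx : J ⊆ OrderDual.ofDual x.2 := hx.2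
    refine ⟨(stableOp_simpProg (hIJ.trans hJx) ?_).ge, stableOp_mono_program simpProg_subset x.1⟩
    exact (stableOp_anti P hJx).trans (hSJ.trans_subset hIJ)
end
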